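/- arXiv:1902.10348 — 7 statements merged into one kernel-verified Lean document; each statement's English description precedes it below -/
import Mathlib

section
/- If G is an N×N matrix with property S, then an LU decomposition G = LU exists with L unit lower triangular and U upper triangular, and no row permutations are required. -/
/-!
Gaussian elimination without pivoting. If the pivot `g₀₀` is nonzero, the Schur complement
`g_{ij} - g_{i0} g_{0j} / g₀₀` is again a Z-matrix (we subtract a nonnegative quantity), and its
row and column sums vanish because those of `G` do; so induction on the size applies. If the
pivot is zero, the zero row sum of a row with nonpositive off-diagonal entries forces the whole
first row, and likewise the first column, to vanish, so the elimination step is trivial.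
-/

open Matrix Finset

structure HasPropertyS {K n : Type*} [AddCommMonoid K] [LE K] [Fintype n]
    (G : Matrix n n K) : Prop where
  offDiag_nonpos : ∀ i j, i ≠ j → G i j ≤ 0
  sum_row : ∀ i, ∑ j, G i j = 0
  sum_col : ∀ j, ∑ i, G i j = 0

def HasLU {R n : Type*} [CommRing R] [Fintype n] [LinearOrder n] (G : Matrix n n R) : Prop :=
  ∃ L U : Matrix n n R,
    (∀ i, L i i = 1) ∧ L.IsLowerTriangular ∧ U.IsUpperTriangular ∧ G = L * U

section Bordered

variable {R : Type*} {N : ℕ}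

/-- The block matrix `[a, r; c, A]`. -/
def bordered (a : R) (r c : Fin N → R) (A : Matrix (Fin N) (Fin N) R) :
    Matrix (Fin (N + 1)) (Fin (N + 1)) R :=
  of (vecCons (vecCons a r) fun i => vecCons (c i) (A i))

variable (a : R) (r c : Fin N → R) (A : Matrix (Fin N) (Fin N) R)

@[simp] lemma bordered_zero_zero : bordered a r c A 0 0 = a := rfl
@[simp] lemma bordered_zero_succ (j : Fin N) : bordered a r c A 0 j.succ = r j := rfl
@[simp] lemma bordered_succ_zero (i : Fin N) : bordered a r c A i.succ 0 = c i := rfl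
@[simp] lemma bordered_succ_succ (i j : Fin N) : bordered a r c A i.succ j.succ = A i j := rfl

lemma bordered_diag_eq_one [One R] {A : Matrix (Fin N) (Fin N) R} (hA : ∀ i, A i i = 1) :
    ∀ i, bordered 1 r c A i i = 1 :=
  Fin.cases rfl hA

lemma eq_bordered (G : Matrix (Fin (N + 1)) (Fin (N + 1)) R) :
    G = bordered (G 0 0) (fun j => G 0 j.succ) (fun i => G i.succ 0)
      (G.submatrix Fin.succ Fin.succ) := by
  ext i j
  cases i using Fin.cases <;> cases j using Fin.cases <;> rfl

lemma bordered_mul_bordered [CommRing R] (b : R) (s d : Fin N → R)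
    (B : Matrix (Fin N) (Fin N) R) :
    bordered a r c A * bordered b s d B =
      bordered (a * b + r ⬝ᵥ d) (a • s + r ᵥ* B) (b • c + A *ᵥ d)
        (vecMulVec c s + A * B) := by
  ext i j
  cases i using Fin.cases <;> cases j using Fin.cases <;>
    simp [mul_apply, Fin.sum_univ_succ, dotProduct, vecMul, mulVec, vecMulVec, mul_comm]

end Bordered

section Triangular

variable {R : Type*} [Zero R] {N : ℕ} (a : R) (r c : Fin N → R) {A : Matrix (Fin N) (Fin N) R}

lemma isUpperTriangular_bordered (hA : A.IsUpperTriangular) :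
    (bordered a r 0 A).IsUpperTriangular := by
  intro i j hji
  cases i using Fin.cases with
  | zero => exact absurd hji (Fin.not_lt_zero j)
  | succ i =>
    cases j using Fin.cases with
    | zero => rfl
    | succ j => exact hA (Fin.succ_lt_succ_iff.mp hji)

lemma isLowerTriangular_bordered (hA : A.IsLowerTriangular) :
    (bordered a 0 c A).IsLowerTriangular := by
  intro i j hij
  cases j using Fin.cases with
  | zero => exact absurd hij (Fin.not_lt_zero i)
  | succ j =>
    cases i using Fin.cases with
    | zero => rfl
    | succ i => exact hA (Fin.succ_lt_succ_iff.mp hij)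

end Triangular

section SchurComplement

variable {K : Type*} [Field K] {N : ℕ}

/-- For `G 0 0 = 0`, division by zero makes this the plain lower right block of `G`. -/
def firstSchurComplement (G : Matrix (Fin (N + 1)) (Fin (N + 1)) K) :
    Matrix (Fin N) (Fin N) K :=
  of fun i j => G i.succ j.succ - G i.succ 0 * G 0 j.succ / G 0 0

lemma firstSchurComplement_transpose (G : Matrix (Fin (N + 1)) (Fin (N + 1)) K) :
    firstSchurComplement Gᵀ = (firstSchurComplement G)ᵀ := by
  ext i j
  simp [firstSchurComplement, mul_comm]

lemma HasLU.of_firstSchurComplement {G : Matrix (Fin (N + 1)) (Fin (N + 1)) K}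
    (hcol : G 0 0 = 0 → ∀ i : Fin N, G i.succ 0 = 0) (h : HasLU (firstSchurComplement G)) :
    HasLU G := by
  obtain ⟨L, U, hL1, hL, hU, hLU⟩ := h
  refine ⟨bordered 1 0 (fun i => G i.succ 0 / G 0 0) L,
    bordered (G 0 0) (fun j => G 0 j.succ) 0 U,
    bordered_diag_eq_one _ _ hL1, isLowerTriangular_bordered _ _ hL,
    isUpperTriangular_bordered _ _ hU, ?_⟩
  rw [bordered_mul_bordered, ← hLU]
  conv_lhs => rw [eq_bordered G]
  congr 1
  · simp
  · ext j; simp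
  · ext i; simp [mul_div_cancel_of_imp' fun h => hcol h i]
  · ext i j
    simp only [submatrix_apply, firstSchurComplement, Matrix.add_apply, vecMulVec_apply, of_apply]
    ring

end SchurComplement

namespace HasPropertyS

variable {K n : Type*} [Fintype n] {G : Matrix n n K}

lemma transpose [AddCommMonoid K] [LE K] (hG : HasPropertyS G) : HasPropertyS Gᵀ :=
  ⟨fun i j hij => hG.offDiag_nonpos j i hij.symm, hG.sum_col, hG.sum_row⟩

section OrderedGroup

variable [AddCommGroup K] [PartialOrder K] [DecidableEq n]

lemma diag_eq_neg_sum_offDiag_row (hG : HasPropertyS G) (i : n) :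
    G i i = -∑ j ∈ univ.erase i, G i j := by
  rw [eq_neg_iff_add_eq_zero, add_sum_erase _ _ (mem_univ i), hG.sum_row]

lemma offDiag_row_nonpos (hG : HasPropertyS G) (i : n) : ∀ j ∈ univ.erase i, G i j ≤ 0 :=
  fun j hj => hG.offDiag_nonpos i j (ne_of_mem_erase hj).symm

lemma diag_nonneg [IsOrderedAddMonoid K] (hG : HasPropertyS G) (i : n) : 0 ≤ G i i := by
  rw [hG.diag_eq_neg_sum_offDiag_row i, neg_nonneg]
  exact sum_nonpos (hG.offDiag_row_nonpos i)

lemma row_eq_zero_of_diag_eq_zero [IsOrderedAddMonoid K] (hG : HasPropertyS G) {i : n}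
    (hi : G i i = 0) (j : n) :
    G i j = 0 := by
  obtain rfl | hji := eq_or_ne j i
  · exact hi
  have hsum : ∑ j ∈ univ.erase i, G i j = 0 := by
    rwa [hG.diag_eq_neg_sum_offDiag_row i, neg_eq_zero] at hi
  exact (sum_eq_zero_iff_of_nonpos (hG.offDiag_row_nonpos i)).mp hsum j
    (mem_erase.mpr ⟨hji, mem_univ j⟩)

lemma col_eq_zero_of_diag_eq_zero [IsOrderedAddMonoid K] (hG : HasPropertyS G) {i : n}
    (hi : G i i = 0) (j : n) :
    G j i = 0 :=
  hG.transpose.row_eq_zero_of_diag_eq_zero hi j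

end OrderedGroup

variable [Field K] [LinearOrder K] [IsStrictOrderedRing K]

section Elimination

variable {N : ℕ} {G : Matrix (Fin (N + 1)) (Fin (N + 1)) K}

lemma sum_row_firstSchurComplement (hG : HasPropertyS G) (i : Fin N) :
    ∑ j, firstSchurComplement G i j = 0 := by
  have hrow_i := hG.sum_row i.succ
  have hrow_0 := hG.sum_row 0
  rw [Fin.sum_univ_succ] at hrow_i hrow_0
  have hcancel : G i.succ 0 / G 0 0 * G 0 0 = G i.succ 0 :=
    div_mul_cancel_of_imp fun h => hG.col_eq_zero_of_diag_eq_zero h _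
  calc ∑ j, firstSchurComplement G i j
      = ∑ j : Fin N, G i.succ j.succ - G i.succ 0 / G 0 0 * ∑ j : Fin N, G 0 j.succ := by
        simp only [firstSchurComplement, of_apply, sum_sub_distrib, mul_sum]
        congr 1
        exact sum_congr rfl fun j _ => by ring
    _ = 0 := by linear_combination hrow_i - G i.succ 0 / G 0 0 * hrow_0 + hcancel

lemma firstSchurComplement (hG : HasPropertyS G) : HasPropertyS (firstSchurComplement G) where
  offDiag_nonpos i j hij := by
    have hG_ij : G i.succ j.succ ≤ 0 := hG.offDiag_nonpos _ _ (Fin.succ_injective N |>.ne hij)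
    have hcorr : 0 ≤ G i.succ 0 * G 0 j.succ / G 0 0 :=
      div_nonneg (mul_nonneg_of_nonpos_of_nonpos (hG.offDiag_nonpos _ _ (Fin.succ_ne_zero i))
        (hG.offDiag_nonpos _ _ (Fin.succ_ne_zero j).symm)) (hG.diag_nonneg 0)
    simp only [_root_.firstSchurComplement, of_apply]
    linarith
  sum_row := hG.sum_row_firstSchurComplement
  sum_col j := by
    simpa [firstSchurComplement_transpose] using hG.transpose.sum_row_firstSchurComplement j

end Elimination

theorem hasLU : ∀ {N : ℕ} {G : Matrix (Fin N) (Fin N) K}, HasPropertyS G → HasLU G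
  | 0, _, _ =>
    ⟨1, 1, fun i => i.elim0, fun i => i.elim0, fun i => i.elim0, Subsingleton.elim _ _⟩
  | _ + 1, _, hG =>
    .of_firstSchurComplement (fun h i => hG.col_eq_zero_of_diag_eq_zero h i.succ)
      hG.firstSchurComplement.hasLU

end HasPropertyS

theorem property_S_LU_exists_general (N : ℕ) (G : Matrix (Fin N) (Fin N) ℝ)
    (hoff : ∀ i j, i ≠ j → G i j ≤ 0)
    (hrow : ∀ i, ∑ j, G i j = 0)
    (hcol : ∀ j, ∑ i, G i j = 0) :
    ∃ L U : Matrix (Fin N) (Fin N) ℝ,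
      (∀ i, L i i = 1) ∧ (∀ i j : Fin N, i < j → L i j = 0) ∧
      (∀ i j : Fin N, j < i → U i j = 0) ∧ G = L * U := by
  obtain ⟨L, U, hL1, hL, hU, hLU⟩ := HasPropertyS.hasLU ⟨hoff, hrow, hcol⟩
  exact ⟨L, U, hL1, fun i j hij => hL (OrderDual.toDual_lt_toDual.mpr hij),
    fun i j hji => hU hji, hLU⟩

/-- A matrix with property S admits an LU decomposition with no row permutations. -/
theorem property_S_LU_exists (N : ℕ) (G : Matrix (Fin N) (Fin N) ℝ)
    (hdiag : ∀ i, 0 ≤ G i i)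
    (hoff : ∀ i j, i ≠ j → G i j ≤ 0)
    (hrow : ∀ i, ∑ j, G i j = 0)
    (hcol : ∀ j, ∑ i, G i j = 0) :
    ∃ L U : Matrix (Fin N) (Fin N) ℝ,
      (∀ i, L i i = 1) ∧ (∀ i j : Fin N, i < j → L i j = 0) ∧
      (∀ i j : Fin N, j < i → U i j = 0) ∧ G = L * U :=
  property_S_LU_exists_general N G hoff hrow hcol
end

section
/- If G has property S and G = LU is an LU decomposition with L unit lower triangular and U upper triangular, then the last diagonal entry of U is zero: u_{NN} = 0. -/
/-- For a property-S matrix with LU decomposition G = LU, the last diagonal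
entry of U is zero. -/
theorem property_S_u_last_eq_zero (N : ℕ) (G L U : Matrix (Fin (N + 1)) (Fin (N + 1)) ℝ)
    (hdiag : ∀ i, 0 ≤ G i i)
    (hoff : ∀ i j, i ≠ j → G i j ≤ 0)
    (hrow : ∀ i, ∑ j, G i j = 0)
    (hcol : ∀ j, ∑ i, G i j = 0)
    (hLdiag : ∀ i, L i i = 1)
    (hLlow : ∀ i j : Fin (N + 1), i < j → L i j = 0)
    (hUup : ∀ i j : Fin (N + 1), j < i → U i j = 0)
    (hLU : G = L * U) :
    U (Fin.last N) (Fin.last N) = 0 := by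
  have hLdet : L.det = 1 := by
    rw [Matrix.det_of_lowerTriangular L (fun i j h => hLlow i j h)]
    simp [hLdiag]
  have hLunit : IsUnit L := by
    rw [Matrix.isUnit_iff_isUnit_det, hLdet]; exact isUnit_one
  have hinj := Matrix.mulVec_injective_iff_isUnit.mpr hLunit
  have hGe : G.mulVec (fun _ => 1) = 0 := by
    funext i
    simp [Matrix.mulVec, dotProduct, hrow i]
  have hUe : U.mulVec (fun _ => 1) = 0 := by
    apply hinj
    rw [Matrix.mulVec_mulVec, ← hLU, hGe, Matrix.mulVec_zero]
  have := congrFun hUe (Fin.last N)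
  simp only [Matrix.mulVec, dotProduct, Pi.zero_apply, mul_one] at this
  rwa [Finset.sum_eq_single (Fin.last N)
    (fun j _ hj => hUup _ j (lt_of_le_of_ne (Fin.le_last j) hj))
    (by simp)] at this
end

section
/- If G has property S, has rank N−1, and G = LU with L unit lower triangular and U upper triangular, then Lᵀe = e_N, i.e., each column of L except the last sums to zero and the last column of L is e_N. -/
/-!
Write `v = Lᵀe`. Zero column sums give `vᵀU = eᵀG = 0`, and since `L` is unit lower triangular
the last entry of `v` is `L_NN = 1`. The remaining entries vanish by forward substitution in
`vᵀU = 0`, once the diagonal entries `U_kk`, `k < N`, are known to be nonzero. If some `U_kk = 0`,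
the leading `(k+1) × (k+1)` block of `U` is singular, so `U`, hence `G`, kills a nonzero vector
supported on the first `k+1` coordinates; together with `e` (zero row sums) this gives two
independent vectors in a kernel that rank `N` forces to be a line.
-/

open Matrix

namespace Matrix

variable {ι K : Type*} [Fintype ι] [Field K]

theorem exists_eq_smul_of_mulVec_eq_zero_of_rank_eq {A : Matrix ι ι K}
    (hA : A.rank = Fintype.card ι - 1) {v x : ι → K} (hv : A *ᵥ v = 0) (hv0 : v ≠ 0)
    (hx : A *ᵥ x = 0) : ∃ c : K, x = c • v := by
  have hker : Module.finrank K (LinearMap.ker A.mulVecLin) = 1 := by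
    have h := LinearMap.finrank_range_add_finrank_ker A.mulVecLin
    obtain ⟨i, -⟩ := Function.ne_iff.mp hv0
    have hpos : 0 < Fintype.card ι := Fintype.card_pos_iff.mpr ⟨i⟩
    rw [← Matrix.rank, hA, Module.finrank_fintype_fun_eq_card] at h
    omega
  obtain ⟨c, hc⟩ := (finrank_eq_one_iff_of_nonzero' (⟨v, hv⟩ : LinearMap.ker A.mulVecLin)
    (by simpa [Subtype.ext_iff] using hv0)).mp hker ⟨x, hx⟩
  exact ⟨c, (congrArg Subtype.val hc).symm⟩

variable [LinearOrder ι]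

theorem IsUpperTriangular.exists_mulVec_eq_zero_of_diag_eq_zero {U : Matrix ι ι K}
    (hU : U.IsUpperTriangular) {k : ι} (hk : U k k = 0) :
    ∃ x ≠ 0, U *ᵥ x = 0 ∧ ∀ j, k < j → x j = 0 := by
  let V : Matrix {j // j ≤ k} {j // j ≤ k} K := U.submatrix Subtype.val Subtype.val
  have hV : V.det = 0 := by
    rw [det_of_isUpperTriangular (hU.submatrix (f := Subtype.val))]
    exact Finset.prod_eq_zero (i := ⟨k, le_rfl⟩) (Finset.mem_univ _) hk
  obtain ⟨y, hy0, hy⟩ := exists_mulVec_eq_zero_iff.mpr hV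
  classical
  let x : ι → K := fun j => if h : j ≤ k then y ⟨j, h⟩ else 0
  have hxy : ∀ j : {j // j ≤ k}, x j = y j := fun j => dif_pos j.2
  refine ⟨x, ?_, ?_, fun j hj => dif_neg (not_le.mpr hj)⟩
  · obtain ⟨j, hj⟩ := Function.ne_iff.mp hy0
    exact Function.ne_iff.mpr ⟨j, (hxy j).trans_ne hj⟩
  · ext i
    rw [mulVec, dotProduct, ← Fintype.sum_subtype_add_sum_subtype (· ≤ k)]
    have hout : ∑ j : {j // ¬j ≤ k}, U i j * x j = 0 :=
      Finset.sum_eq_zero fun j _ => by rw [show x j = 0 from dif_neg j.2, mul_zero]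
    rw [hout, add_zero, Pi.zero_apply]
    simp_rw [hxy]
    by_cases hi : i ≤ k
    · exact congrFun hy ⟨i, hi⟩
    · exact Finset.sum_eq_zero fun j _ => by
        rw [hU (lt_of_le_of_lt j.2 (not_le.mp hi)), zero_mul]

theorem IsUpperTriangular.diag_ne_zero_of_rank_mul_eq {L U : Matrix ι ι K}
    (hU : U.IsUpperTriangular) (hrank : (L * U).rank = Fintype.card ι - 1) {v : ι → K}
    (hv : (L * U) *ᵥ v = 0) {k j : ι} (hkj : k < j) (hvj : v j ≠ 0) : U k k ≠ 0 := by
  intro hk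
  obtain ⟨x, hx0, hUx, hxj⟩ := hU.exists_mulVec_eq_zero_of_diag_eq_zero hk
  have hLUx : (L * U) *ᵥ x = 0 := by rw [← mulVec_mulVec, hUx, mulVec_zero]
  obtain ⟨c, rfl⟩ :=
    exists_eq_smul_of_mulVec_eq_zero_of_rank_eq hrank hv (fun h => hvj (congrFun h j)) hLUx
  have hc : c = 0 := by simpa [hvj] using hxj j hkj
  exact hx0 (by rw [hc, zero_smul])

theorem IsUpperTriangular.apply_eq_zero_of_vecMul_eq_zero {U : Matrix ι ι K}
    (hU : U.IsUpperTriangular) {v : ι → K} (hv : v ᵥ* U = 0) {j : ι}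
    (hdiag : ∀ i ≤ j, U i i ≠ 0) : v j = 0 := by
  induction j using WellFoundedLT.induction with
  | _ j ih =>
    have hvj : v j * U j j = 0 := by
      have h := congrFun hv j
      rwa [vecMul, dotProduct, Finset.sum_eq_single j ?_ (by simp)] at h
      intro i _ hij
      rcases hij.lt_or_gt with hij | hij
      · rw [ih i hij fun i' hi' => hdiag i' (hi'.trans hij.le), zero_mul]
      · rw [hU hij, mul_zero]
    exact (mul_eq_zero.mp hvj).resolve_right (hdiag j le_rfl)

end Matrix

theorem property_S_LT_e_eq_eN_general (N : ℕ) (G L U : Matrix (Fin (N + 1)) (Fin (N + 1)) ℝ)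
    (hrow : ∀ i, ∑ j, G i j = 0)
    (hcol : ∀ j, ∑ i, G i j = 0)
    (hrank : G.rank = N)
    (hLdiag : ∀ i, L i i = 1)
    (hLlow : ∀ i j : Fin (N + 1), i < j → L i j = 0)
    (hUup : ∀ i j : Fin (N + 1), j < i → U i j = 0)
    (hLU : G = L * U) :
    Lᵀ *ᵥ (fun _ => (1 : ℝ)) = Pi.single (Fin.last N) 1 := by
  subst hLU
  have hU : U.IsUpperTriangular := fun i j => hUup i j
  have hGe : (L * U) *ᵥ (fun _ => (1 : ℝ)) = 0 :=
    funext fun i => by simpa [mulVec, dotProduct] using hrow i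
  have hvU : (Lᵀ *ᵥ fun _ => (1 : ℝ)) ᵥ* U = 0 := by
    rw [mulVec_transpose, vecMul_vecMul]
    exact funext fun j => by simpa [vecMul, dotProduct] using hcol j
  ext j
  rcases (Fin.le_last j).lt_or_eq with hj | rfl
  · rw [Pi.single_eq_of_ne hj.ne]
    refine hU.apply_eq_zero_of_vecMul_eq_zero hvU fun i hi => ?_
    exact hU.diag_ne_zero_of_rank_mul_eq (by simpa using hrank) hGe (hi.trans_lt hj) one_ne_zero
  · rw [Pi.single_eq_same, mulVec, dotProduct, Finset.sum_eq_single (Fin.last N)]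
    · simp [hLdiag]
    · intro i _ hi
      rw [transpose_apply, hLlow _ _ (Fin.lt_last_iff_ne_last.mpr hi), mul_one]
    · simp

/-- For a property-S matrix of rank N−1 with LU decomposition G = LU, the column
sums of L are given by Lᵀe = e_N. -/
theorem property_S_LT_e_eq_eN (N : ℕ) (G L U : Matrix (Fin (N + 1)) (Fin (N + 1)) ℝ)
    (hdiag : ∀ i, 0 ≤ G i i)
    (hoff : ∀ i j, i ≠ j → G i j ≤ 0)
    (hrow : ∀ i, ∑ j, G i j = 0)
    (hcol : ∀ j, ∑ i, G i j = 0)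
    (hrank : G.rank = N)
    (hLdiag : ∀ i, L i i = 1)
    (hLlow : ∀ i j : Fin (N + 1), i < j → L i j = 0)
    (hUup : ∀ i j : Fin (N + 1), j < i → U i j = 0)
    (hLU : G = L * U) :
    Lᵀ *ᵥ (fun _ => (1 : ℝ)) = Pi.single (Fin.last N) 1 :=
  property_S_LT_e_eq_eN_general N G L U hrow hcol hrank hLdiag hLlow hUup hLU
end

section
/- If G has property S and rank N−1, then the matrix G + e e_Nᵀ is nonsingular, where e is the all-ones vector and e_N the last standard basis vector. -/
open Matrix

/-- For a property-S matrix of rank N−1, G + e e_Nᵀ is nonsingular. -/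
theorem property_S_rank_one_correction_nonsingular (N : ℕ)
    (G : Matrix (Fin (N + 1)) (Fin (N + 1)) ℝ)
    (hdiag : ∀ i, 0 ≤ G i i)
    (hoff : ∀ i j, i ≠ j → G i j ≤ 0)
    (hrow : ∀ i, ∑ j, G i j = 0)
    (hcol : ∀ j, ∑ i, G i j = 0)
    (hrank : G.rank = N) :
    IsUnit (G + vecMulVec (fun _ => (1 : ℝ)) (Pi.single (Fin.last N) 1)).det := by
  rw [isUnit_iff_ne_zero]
  intro hdet
  rw [← Matrix.exists_mulVec_eq_zero_iff] at hdet
  obtain ⟨v, hv, hMv⟩ := hdet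
  set e : Fin (N + 1) → ℝ := fun _ => 1 with he
  -- compute the mulVec
  have hMv' : ∀ i, G.mulVec v i + v (Fin.last N) = 0 := by
    intro i
    have := congrFun hMv i
    rw [Matrix.add_mulVec, Pi.add_apply] at this
    have h2 : (vecMulVec e (Pi.single (Fin.last N) 1) *ᵥ v) i = v (Fin.last N) := by
      simp [Matrix.mulVec, Matrix.vecMulVec_apply, dotProduct, Pi.single_apply, he,
        Finset.sum_ite_eq', mul_comm]
    rw [h2] at this
    exact this
  -- sum over i
  have hsum : (N + 1 : ℝ) * v (Fin.last N) = 0 := by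
    have h1 : ∑ i, (G.mulVec v i + v (Fin.last N)) = 0 := by
      simp [hMv']
    have h2 : ∑ i, G.mulVec v i = 0 := by
      simp only [Matrix.mulVec, dotProduct]
      rw [Finset.sum_comm]
      calc ∑ j, ∑ i, G i j * v j = ∑ j, (∑ i, G i j) * v j := by
            simp [Finset.sum_mul]
        _ = 0 := by simp [hcol]
    rw [Finset.sum_add_distrib, h2, zero_add, Finset.sum_const] at h1
    simpa [mul_comm] using h1
  have hvN : v (Fin.last N) = 0 := by
    have : (N + 1 : ℝ) ≠ 0 := by positivity
    exact (mul_eq_zero.mp hsum).resolve_left this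
  have hGv : G.mulVec v = 0 := by
    funext i
    have := hMv' i
    rw [hvN, add_zero] at this
    simpa using this
  -- e is in the kernel
  have heKer : G.mulVec e = 0 := by
    funext i
    simp [Matrix.mulVec, dotProduct, he, hrow]
  have heNe : e ≠ 0 := by
    intro h
    have := congrFun h (Fin.last N)
    simp [he] at this
  -- kernel has dimension 1
  have hker : Module.finrank ℝ (LinearMap.ker G.mulVecLin) = 1 := by
    have h := LinearMap.finrank_range_add_finrank_ker G.mulVecLin
    have hr : Module.finrank ℝ (LinearMap.range G.mulVecLin) = N := hrank
    have hd : Module.finrank ℝ (Fin (N + 1) → ℝ) = N + 1 := by simp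
    omega
  have hspan : (Submodule.span ℝ {e}) = LinearMap.ker G.mulVecLin := by
    apply Submodule.eq_of_le_of_finrank_le
    · rw [Submodule.span_le, Set.singleton_subset_iff]
      exact heKer
    · rw [hker, finrank_span_singleton heNe]
  have hvKer : v ∈ Submodule.span ℝ {e} := by
    rw [hspan]
    exact hGv
  obtain ⟨c, hc⟩ := Submodule.mem_span_singleton.mp hvKer
  have hc0 : c = 0 := by
    have h := congrFun hc (Fin.last N)
    rw [hvN] at h
    simpa [he] using h
  apply hv
  rw [← hc, hc0, zero_smul]
end

section
/- Let P be an N×N doubly stochastic matrix such that A = I − P + (1/N)eeᵀ is nonsingular, and let I − P = LU be the LU decomposition with L unit lower triangular. Define v by Lv = e, Ū = U + v e_Nᵀ, and w by Ūᵀw = (1/N)e − e_N. Then wᵀv = 0. -/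
open Matrix

/-!
Write `e` for the all-ones vector. Since `P` has unit row sums, `(1 - P) e = 0`; as `L` is unit
lower triangular it is invertible, so `U e = 0` and hence `Ū e = U e + v (e_Nᵀ e) = v`. Therefore
`wᵀ v = wᵀ Ū e = (Ūᵀ w)ᵀ e = ((N + 1)⁻¹ e - e_N)ᵀ e = 1 - 1 = 0`.
-/

variable {n R : Type*} [Fintype n]

theorem one_sub_mulVec_one_eq_zero [Ring R] [DecidableEq n] {P : Matrix n n R}
    (hrow : ∀ i, ∑ j, P i j = 1) : (1 - P) *ᵥ (fun _ => (1 : R)) = 0 := by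
  rw [sub_mulVec, one_mulVec]
  ext i
  simp [mulVec, dotProduct, hrow i]

theorem isUnit_of_isLowerTriangular_of_diag_eq_one [CommRing R] [LinearOrder n] [DecidableEq n]
    {L : Matrix n n R} (hlow : L.IsLowerTriangular) (hdiag : ∀ i, L i i = 1) : IsUnit L := by
  rw [isUnit_iff_isUnit_det, det_of_isLowerTriangular L hlow]
  simp [hdiag]

theorem mulVec_eq_zero_of_mul_mulVec_eq_zero [CommSemiring R] [DecidableEq n] {L U : Matrix n n R}
    {x : n → R} (hL : IsUnit L) (h : (L * U) *ᵥ x = 0) : U *ᵥ x = 0 :=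
  mulVec_injective_of_isUnit hL <| by rw [mulVec_mulVec, h, mulVec_zero]

theorem add_vecMulVec_single_one_mulVec_one [CommSemiring R] [DecidableEq n] {U : Matrix n n R}
    (hU : U *ᵥ (fun _ => (1 : R)) = 0) (v : n → R) (k : n) :
    (U + vecMulVec v (Pi.single k 1)) *ᵥ (fun _ => (1 : R)) = v := by
  rw [add_mulVec, hU, vecMulVec_mulVec, single_one_dotProduct]
  simp

theorem dotProduct_eq_of_mulVec_eq_of_transpose_mulVec_eq [CommSemiring R] {M : Matrix n n R}
    {x y v w : n → R} (hx : M *ᵥ x = v) (hw : Mᵀ *ᵥ w = y) : w ⬝ᵥ v = y ⬝ᵥ x := by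
  rw [← hx, dotProduct_mulVec, ← hw, mulVec_transpose]

theorem inv_card_smul_one_sub_single_dotProduct_one [Field R] [DecidableEq n] (k : n)
    [NeZero (Fintype.card n : R)] :
    ((Fintype.card n : R)⁻¹ • (fun _ => (1 : R)) - Pi.single k 1) ⬝ᵥ (fun _ => (1 : R))
      = 0 := by
  rw [sub_dotProduct, smul_dotProduct, single_one_dotProduct]
  simp [dotProduct, NeZero.ne]

theorem wT_v_eq_zero_general (N : ℕ) (P : Matrix (Fin (N + 1)) (Fin (N + 1)) ℝ)
    (hrow : ∀ i, ∑ j, P i j = 1)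
    (L U : Matrix (Fin (N + 1)) (Fin (N + 1)) ℝ)
    (hLdiag : ∀ i, L i i = 1)
    (hLlow : ∀ i j : Fin (N + 1), i < j → L i j = 0)
    (hLU : 1 - P = L * U)
    (v w : Fin (N + 1) → ℝ)
    (hw : (U + vecMulVec v (Pi.single (Fin.last N) 1))ᵀ *ᵥ w
        = (N + 1 : ℝ)⁻¹ • (fun _ => (1 : ℝ)) - Pi.single (Fin.last N) 1) :
    w ⬝ᵥ v = 0 := by
  have hL : IsUnit L := isUnit_of_isLowerTriangular_of_diag_eq_one hLlow hLdiag
  have hUe : U *ᵥ (fun _ => (1 : ℝ)) = 0 :=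
    mulVec_eq_zero_of_mul_mulVec_eq_zero hL (hLU ▸ one_sub_mulVec_one_eq_zero hrow)
  have hUbar := add_vecMulVec_single_one_mulVec_one hUe v (Fin.last N)
  rw [dotProduct_eq_of_mulVec_eq_of_transpose_mulVec_eq hUbar hw]
  have hcard : (N + 1 : ℝ) = (Fintype.card (Fin (N + 1)) : ℝ) := by simp
  rw [hcard]
  exact inv_card_smul_one_sub_single_dotProduct_one _

/-- With A = I − P + (1/N)eeᵀ nonsingular and I − P = LU, setting Lv = e,
Ū = U + v e_Nᵀ and Ūᵀw = (1/N)e − e_N, we have wᵀv = 0. -/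
theorem wT_v_eq_zero (N : ℕ) (P : Matrix (Fin (N + 1)) (Fin (N + 1)) ℝ)
    (hnonneg : ∀ i j, 0 ≤ P i j)
    (hrow : ∀ i, ∑ j, P i j = 1)
    (hcol : ∀ j, ∑ i, P i j = 1)
    (hA : (1 - P + ((N + 1 : ℝ))⁻¹ • vecMulVec (fun _ => (1 : ℝ)) (fun _ => (1 : ℝ))).det ≠ 0)
    (L U : Matrix (Fin (N + 1)) (Fin (N + 1)) ℝ)
    (hLdiag : ∀ i, L i i = 1)
    (hLlow : ∀ i j : Fin (N + 1), i < j → L i j = 0)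
    (hUup : ∀ i j : Fin (N + 1), j < i → U i j = 0)
    (hLU : 1 - P = L * U)
    (v w : Fin (N + 1) → ℝ)
    (hv : L *ᵥ v = fun _ => (1 : ℝ))
    (hw : (U + vecMulVec v (Pi.single (Fin.last N) 1))ᵀ *ᵥ w
        = (N + 1 : ℝ)⁻¹ • (fun _ => (1 : ℝ)) - Pi.single (Fin.last N) 1) :
    w ⬝ᵥ v = 0 :=
  wT_v_eq_zero_general N P hrow L U hLdiag hLlow hLU v w hw
end

section
/- Let P be an N×N doubly stochastic matrix such that A(P) = I − P + (1/N)eeᵀ is nonsingular, and let I − P = LU be its LU decomposition with L unit lower triangular and U upper triangular with diagonal entries u_{ii}. Then det(A(P)) = N · ∏_{i=1}^{N−1} u_{ii}. -/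
/-!
Write `A = I - P`, whose row and column sums vanish, and `B = A + c • eeᵀ` with `c = 1/N`.
Adding all rows of `B` to its last row turns that row into `(c N) • eᵀ`; after factoring out
`c N`, subtracting `c` times the new last row from the other rows removes the rank-one term, so
`det B = c N · det A'`, where `A'` is `A` with last row `eᵀ`. Adding all columns of `A'` to its
last column makes that column `N • e_N`, so `det A' = N · det A₁₁` with `A₁₁` the leading
`(N-1) × (N-1)` block of `A`. Since `L` is lower triangular, `A₁₁ = L₁₁ U₁₁`, whose determinant
is `∏_{i<N} u_ii`; altogether `det B = c N² ∏_{i<N} u_ii = N ∏_{i<N} u_ii`.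
-/

open Matrix

theorem Fin.prod_univ_erase_last {M : Type*} [CommMonoid M] {n : ℕ} (f : Fin (n + 1) → M) :
    ∏ i ∈ Finset.univ.erase (Fin.last n), f i = ∏ i : Fin n, f i.castSucc := by
  have : Finset.univ.erase (Fin.last n) = Finset.univ.map Fin.castSuccEmb := by
    ext i
    simp [Fin.exists_castSucc_eq]
  rw [this, Finset.prod_map]
  rfl

namespace Matrix

variable {R : Type*} [CommRing R]

section

variable {m : Type*} [Fintype m] [DecidableEq m]

theorem det_updateRow_vecMul_one (M : Matrix m m R) (i : m) :
    (M.updateRow i (1 ᵥ* M)).det = M.det := by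
  simpa [vecMul_eq_sum] using det_updateRow_sum M i 1

theorem det_updateCol_mulVec_one (M : Matrix m m R) (j : m) :
    (M.updateCol j (M *ᵥ 1)).det = M.det := by
  rw [← det_transpose, ← updateRow_transpose, ← vecMul_transpose, det_updateRow_vecMul_one,
    det_transpose]

end

variable {n : ℕ}

theorem det_updateRow_last_one_of_mulVec_one_eq_zero (A : Matrix (Fin (n + 1)) (Fin (n + 1)) R)
    (hA : A *ᵥ 1 = 0) :
    (A.updateRow (Fin.last n) 1).det = (n + 1) * (A.submatrix Fin.castSucc Fin.castSucc).det := by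
  set M := A.updateRow (Fin.last n) 1
  have hM : M *ᵥ 1 = Pi.single (Fin.last n) (n + 1 : R) := by
    rw [updateRow_mulVec, hA]
    ext i
    simp [Function.update_apply, Pi.single_apply, dotProduct]
  have hminor : (M.updateCol (Fin.last n) (Pi.single (Fin.last n) (n + 1 : R))).submatrix
      Fin.castSucc Fin.castSucc = A.submatrix Fin.castSucc Fin.castSucc := by
    ext i j
    simp [M, Fin.castSucc_ne_last]
  rw [← det_updateCol_mulVec_one M (Fin.last n), hM, det_succ_column _ (Fin.last n),
    Fintype.sum_eq_single (Fin.last n) fun i hi => by simp [hi]]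
  simp [Fin.succAbove_last, hminor]

theorem det_add_smul_vecMulVec_one_one (A : Matrix (Fin (n + 1)) (Fin (n + 1)) R)
    (hrow : A *ᵥ 1 = 0) (hcol : 1 ᵥ* A = 0) (c : R) :
    (A + c • vecMulVec 1 1).det =
      c * (n + 1) ^ 2 * (A.submatrix Fin.castSucc Fin.castSucc).det := by
  set B := A + c • vecMulVec 1 1
  have hB : 1 ᵥ* B = (c * (n + 1)) • 1 := by
    rw [vecMul_add, hcol, zero_add]
    ext j
    simp [vecMul, dotProduct, mul_comm]
  have hBA : (B.updateRow (Fin.last n) 1).det = (A.updateRow (Fin.last n) 1).det := by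
    refine det_eq_of_forall_row_eq_smul_add_const (fun i => if i = Fin.last n then 0 else c)
      (Fin.last n) (by simp) fun i j => ?_
    by_cases hi : i = Fin.last n <;> simp [B, hi]
  rw [← det_updateRow_vecMul_one B (Fin.last n), hB, det_updateRow_smul, hBA,
    det_updateRow_last_one_of_mulVec_one_eq_zero A hrow]
  ring

theorem submatrix_castSucc_mul_of_isLowerTriangular {L : Matrix (Fin (n + 1)) (Fin (n + 1)) R}
    (hL : L.IsLowerTriangular) (U : Matrix (Fin (n + 1)) (Fin (n + 1)) R) :
    (L * U).submatrix Fin.castSucc Fin.castSucc =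
      L.submatrix Fin.castSucc Fin.castSucc * U.submatrix Fin.castSucc Fin.castSucc := by
  ext i j
  simp [mul_apply, Fin.sum_univ_castSucc, @hL i.castSucc (Fin.last n) (Fin.castSucc_lt_last i)]

theorem det_submatrix_castSucc_mul {L U : Matrix (Fin (n + 1)) (Fin (n + 1)) R}
    (hL : L.IsLowerTriangular) (hU : U.IsUpperTriangular) :
    ((L * U).submatrix Fin.castSucc Fin.castSucc).det =
      ∏ i : Fin n, L i.castSucc i.castSucc * U i.castSucc i.castSucc := by
  rw [submatrix_castSucc_mul_of_isLowerTriangular hL, det_mul, Finset.prod_mul_distrib,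
    det_of_isLowerTriangular (L.submatrix Fin.castSucc Fin.castSucc)
      fun i j h => hL (Fin.castSucc_lt_castSucc_iff.mpr h),
    det_of_isUpperTriangular (M := U.submatrix Fin.castSucc Fin.castSucc)
      fun i j h => hU (Fin.castSucc_lt_castSucc_iff.mpr h)]
  rfl

end Matrix

theorem det_A_eq_N_mul_prod_u_general (N : ℕ) (P : Matrix (Fin (N + 1)) (Fin (N + 1)) ℝ)
    (hrow : ∀ i, ∑ j, P i j = 1)
    (hcol : ∀ j, ∑ i, P i j = 1)
    (L U : Matrix (Fin (N + 1)) (Fin (N + 1)) ℝ)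
    (hLdiag : ∀ i, L i i = 1)
    (hLlow : ∀ i j : Fin (N + 1), i < j → L i j = 0)
    (hUup : ∀ i j : Fin (N + 1), j < i → U i j = 0)
    (hLU : 1 - P = L * U) :
    (1 - P + ((N + 1 : ℝ))⁻¹ • vecMulVec (fun _ => (1 : ℝ)) (fun _ => (1 : ℝ))).det
      = (N + 1 : ℝ) * ∏ i ∈ Finset.univ.erase (Fin.last N), U i i := by
  have hP : P *ᵥ 1 = 1 := funext fun i => by simpa [mulVec, dotProduct] using hrow i
  have hP' : 1 ᵥ* P = 1 := funext fun j => by simpa [vecMul, dotProduct] using hcol j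
  refine (det_add_smul_vecMulVec_one_one (1 - P) (by rw [sub_mulVec, one_mulVec, hP, sub_self])
    (by rw [vecMul_sub, vecMul_one, hP', sub_self]) _).trans ?_
  rw [hLU, det_submatrix_castSucc_mul (fun i j h => hLlow i j h) (fun i j h => hUup i j h),
    Fin.prod_univ_erase_last]
  simp only [hLdiag, one_mul]
  field_simp

/-- det(A(P)) = N ∏_{i=1}^{N−1} u_{ii}, where A(P) = I − P + (1/N)eeᵀ and
I − P = LU. -/
theorem det_A_eq_N_mul_prod_u (N : ℕ) (P : Matrix (Fin (N + 1)) (Fin (N + 1)) ℝ)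
    (hnonneg : ∀ i j, 0 ≤ P i j)
    (hrow : ∀ i, ∑ j, P i j = 1)
    (hcol : ∀ j, ∑ i, P i j = 1)
    (hA : (1 - P + ((N + 1 : ℝ))⁻¹ • vecMulVec (fun _ => (1 : ℝ)) (fun _ => (1 : ℝ))).det ≠ 0)
    (L U : Matrix (Fin (N + 1)) (Fin (N + 1)) ℝ)
    (hLdiag : ∀ i, L i i = 1)
    (hLlow : ∀ i j : Fin (N + 1), i < j → L i j = 0)
    (hUup : ∀ i j : Fin (N + 1), j < i → U i j = 0)
    (hLU : 1 - P = L * U) :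
    (1 - P + ((N + 1 : ℝ))⁻¹ • vecMulVec (fun _ => (1 : ℝ)) (fun _ => (1 : ℝ))).det
      = (N + 1 : ℝ) * ∏ i ∈ Finset.univ.erase (Fin.last N), U i i :=
  det_A_eq_N_mul_prod_u_general N P hrow hcol L U hLdiag hLlow hUup hLU
end

section
/- Let P be an N×N doubly stochastic matrix with I − P of rank N−1, and let G^{NN}(P) denote the leading (N−1)×(N−1) principal submatrix of I − P. Then det(G^{NN}(P)) = (1/N) det(I − P + (1/N) e eᵀ). -/
/-!
Let `A = 1 - P`, whose rows and columns all sum to zero, and `J = e eᵀ`. In `det (A + t • J)`,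
adding every row to the last one makes it `(N + 1) t • e`; subtracting `t` times the new last row
(now `e`) from the others removes `t • J`; adding every column to the last one then turns that
column into `(N + 1) • Pi.single (last N) 1`. Hence `det (A + t • J) = (N + 1)² t` times the
leading principal minor of `A`, and `t = 1 / (N + 1)` gives the identity.
-/

open Matrix

namespace Matrix

variable {R : Type*} [CommRing R]

theorem det_updateRow_add_vecMulVec_self {n : Type*} [Fintype n] [DecidableEq n]
    (A : Matrix n n R) (j : n) (u v : n → R) :
    ((A + vecMulVec u v).updateRow j v).det = (A.updateRow j v).det := by
  refine (det_eq_of_forall_row_eq_smul_add_const (fun i => if i = j then 0 else -u i) j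
    (if_pos rfl) fun i k => ?_).symm
  by_cases hi : i = j
  · simp [hi]
  · simp [hi, vecMulVec_apply]

theorem det_eq_mul_det_updateRow_one_of_sum_col_eq {n : Type*} [Fintype n] [DecidableEq n]
    (B : Matrix n n R) (s : R) (hB : ∀ k, ∑ i, B i k = s) (j : n) :
    B.det = s * (B.updateRow j 1).det := by
  have hrows : ∑ i, (1 : n → R) i • B i = s • 1 := by
    ext k
    simp only [Pi.one_apply, one_smul, Pi.smul_apply, smul_eq_mul, mul_one]
    exact (Finset.sum_apply k _ _).trans (hB k)
  rw [← det_updateRow_smul, ← hrows, det_updateRow_sum, Pi.one_apply, one_smul]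

theorem det_updateCol_single_self {N : ℕ} (M : Matrix (Fin (N + 1)) (Fin (N + 1)) R)
    (j : Fin (N + 1)) :
    (M.updateCol j (Pi.single j 1)).det = (M.submatrix j.succAbove j.succAbove).det := by
  rw [← det_transpose, ← updateRow_transpose, ← adjugate_apply, adjugate_fin_succ_eq_det_submatrix,
    Even.neg_one_pow ⟨j, rfl⟩, one_mul, ← transpose_submatrix, det_transpose]

theorem det_updateRow_one_of_sum_row_eq_zero {N : ℕ} (A : Matrix (Fin (N + 1)) (Fin (N + 1)) R)
    (hA : ∀ i, ∑ k, A i k = 0) (j : Fin (N + 1)) :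
    (A.updateRow j 1).det = (N + 1) * (A.submatrix j.succAbove j.succAbove).det := by
  have hcols : (fun i => ∑ k, (1 : Fin (N + 1) → R) k • A.updateRow j 1 i k)
      = ((N + 1 : R)) • Pi.single j 1 := by
    ext i
    by_cases hi : i = j
    · subst hi; simp
    · simp [hi, hA]
  rw [← submatrix_updateRow_succAbove A 1, ← det_updateCol_single_self, ← det_updateCol_smul,
    ← hcols, det_updateCol_sum, Pi.one_apply, one_smul]

theorem det_add_smul_vecMulVec_one {N : ℕ} (A : Matrix (Fin (N + 1)) (Fin (N + 1)) R)
    (hrow : ∀ i, ∑ k, A i k = 0) (hcol : ∀ k, ∑ i, A i k = 0) (t : R) (j : Fin (N + 1)) :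
    (A + t • vecMulVec 1 1).det = (N + 1) ^ 2 * t * (A.submatrix j.succAbove j.succAbove).det := by
  have hsum : ∀ k,
      ∑ i, (A + t • vecMulVec 1 1 : Matrix (Fin (N + 1)) (Fin (N + 1)) R) i k = (N + 1) * t := by
    intro k
    simp [Finset.sum_add_distrib, hcol]
  rw [det_eq_mul_det_updateRow_one_of_sum_col_eq _ _ hsum j, ← smul_vecMulVec,
    det_updateRow_add_vecMulVec_self, det_updateRow_one_of_sum_row_eq_zero A hrow]
  ring

end Matrix

theorem leading_principal_minor_det_general (N : ℕ) (P : Matrix (Fin (N + 1)) (Fin (N + 1)) ℝ)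
    (hrow : ∀ i, ∑ j, P i j = 1)
    (hcol : ∀ j, ∑ i, P i j = 1) :
    ((1 - P).submatrix Fin.castSucc Fin.castSucc).det
      = ((N + 1 : ℝ))⁻¹ *
        (1 - P + ((N + 1 : ℝ))⁻¹ • vecMulVec (fun _ => (1 : ℝ)) (fun _ => (1 : ℝ))).det := by
  have hrow' : ∀ i, ∑ j, (1 - P) i j = 0 := fun i => by
    simp [Matrix.sub_apply, Finset.sum_sub_distrib, hrow, one_apply]
  have hcol' : ∀ j, ∑ i, (1 - P) i j = 0 := fun j => by
    simp [Matrix.sub_apply, Finset.sum_sub_distrib, hcol, one_apply]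
  have hN : (N + 1 : ℝ) ≠ 0 := N.cast_add_one_ne_zero
  rw [← Pi.one_def, ← Fin.succAbove_last, det_add_smul_vecMulVec_one _ hrow' hcol' _ (Fin.last N)]
  field_simp

/-- For doubly stochastic P with rank(I − P) = N − 1, the determinant of the
leading principal (N−1)×(N−1) submatrix of I − P equals (1/N)·det(I − P + (1/N)eeᵀ). -/
theorem leading_principal_minor_det (N : ℕ) (P : Matrix (Fin (N + 1)) (Fin (N + 1)) ℝ)
    (hnonneg : ∀ i j, 0 ≤ P i j)
    (hrow : ∀ i, ∑ j, P i j = 1)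
    (hcol : ∀ j, ∑ i, P i j = 1)
    (hrank : (1 - P).rank = N) :
    ((1 - P).submatrix Fin.castSucc Fin.castSucc).det
      = ((N + 1 : ℝ))⁻¹ *
        (1 - P + ((N + 1 : ℝ))⁻¹ • vecMulVec (fun _ => (1 : ℝ)) (fun _ => (1 : ℝ))).det :=
  leading_principal_minor_det_general N P hrow hcol
end
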